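/- Generating function in the third parameter of F3: for multiplicative characters A, A', B, B', C of F_q and x, t ∈ F_q \ {0, 1}, y ∈ F_q, (1/(q-1))·Σ_θ (B·B'·C̄·θ choose θ)·F3(A, A'; Bθ, B'; C; x, y)·θ(t) = B̄(1-t)·F3(A, A'; B, B'; C; x/(1-t), y) + (B̄·B̄'·C)(-t)·F3(A, A'; C·B̄', B'; C; x, y) - B̄'(y)·B̄(-t)·(C̄·B')(-x/t)·(Ā choose C̄·B')·(Ā' choose B̄'), where θ ranges over all multiplicative characters of F_q. -/

import Mathlib

open scoped BigOperators Classical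

noncomputable section

variable {F : Type*} [Field F] [Fintype F]

instance : Fintype (MulChar F ℂ) := Fintype.ofFinite _

/-- Jacobi-type sum `J(χ,λ) = Σ_u χ(u) λ(1-u)`. -/
def Jsum (A B : MulChar F ℂ) : ℂ := ∑ u : F, A u * B (1 - u)

/-- Finite field binomial coefficient `(A choose B) = B(-1) J(A, B⁻¹)`. -/
def binom (A B : MulChar F ℂ) : ℂ := B (-1) * Jsum A B⁻¹

/-- Finite field Gauss hypergeometric `₂F₁(A,B;C|x)` (normalized as in the paper). -/
def H2F1 (A B C : MulChar F ℂ) (x : F) : ℂ :=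
  (1 : MulChar F ℂ) x * (B * C) (-1) *
    ∑ y : F, B y * (B⁻¹ * C) (1 - y) * A⁻¹ (1 - x * y)

/-- Finite field `₃F₂`. -/
def H3F2 (A0 A1 A2 B1 B2 : MulChar F ℂ) (x : F) : ℂ :=
  (1 / ((Fintype.card F : ℂ) - 1)) *
    ∑ χ : MulChar F ℂ, binom (A0 * χ) χ * binom (A1 * χ) (B1 * χ) *
      binom (A2 * χ) (B2 * χ) * χ x

/-- Finite field Appell series `F₃`. -/
def AF3 (A A' B B' C : MulChar F ℂ) (x y : F) : ℂ :=
  (1 : MulChar F ℂ) (x * y) * B (-1) * B' (-1) *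
    ∑ u : F, ∑ v : F, B u * B' v * (C * B⁻¹ * B'⁻¹) (1 - u - v) *
      A⁻¹ (1 - u * x) * A'⁻¹ (1 - v * y)

/-! ### Auxiliary lemmas -/

set_option linter.unusedSectionVars false
set_option maxHeartbeats 1000000

lemma mc_ne_zero (χ : MulChar F ℂ) {a : F} (ha : a ≠ 0) : χ a ≠ 0 := by
  intro h
  have h1 : χ a * χ a⁻¹ = 1 := by
    rw [← map_mul, mul_inv_cancel₀ ha, map_one]
  rw [h, zero_mul] at h1
  exact zero_ne_one h1

lemma mc_sq (χ : MulChar F ℂ) : χ (-1) * χ (-1) = 1 := by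
  rw [← map_mul, neg_mul_neg, mul_one, map_one]

lemma mc_inv_neg_one (χ : MulChar F ℂ) : χ⁻¹ (-1) = χ (-1) := by
  rw [MulChar.inv_apply']; norm_num

lemma mc_apply_inv (χ : MulChar F ℂ) (a : F) : χ a⁻¹ = (χ a)⁻¹ := by
  rw [← MulChar.inv_apply', MulChar.inv_apply_eq_inv']

lemma mc_eps (z : F) : (1 : MulChar F ℂ) z = if z = 0 then 0 else 1 := by
  split_ifs with h
  · subst h; exact MulChar.map_zero _
  · exact MulChar.one_apply (isUnit_iff_ne_zero.mpr h)

lemma mc_mul_inv_self (χ : MulChar F ℂ) {a : F} (ha : a ≠ 0) : χ a * χ⁻¹ a = 1 := by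
  rw [MulChar.inv_apply', ← map_mul, mul_inv_cancel₀ ha, map_one]

lemma mc_inv_div (χ : MulChar F ℂ) (a d : F) :
    χ⁻¹ (a / d) * χ a = χ d * (1 : MulChar F ℂ) a := by
  rcases eq_or_ne a 0 with rfl | ha
  · simp [MulChar.map_zero, zero_div]
  rcases eq_or_ne d 0 with rfl | hd
  · simp [MulChar.map_zero, div_zero, mc_eps, ha]
  · rw [MulChar.inv_apply', mc_eps, if_neg ha, mul_one]
    have : (a / d)⁻¹ = d * a⁻¹ := by field_simp
    rw [this, map_mul, mul_assoc, ← map_mul, inv_mul_cancel₀ ha, map_one, mul_one]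

lemma card_mulChar : (Fintype.card (MulChar F ℂ) : ℂ) = (Fintype.card F : ℂ) - 1 := by
  have h := MulChar.card_eq_card_units_of_hasEnoughRootsOfUnity F ℂ
  rw [Nat.card_eq_fintype_card, Nat.card_eq_fintype_card, Fintype.card_units] at h
  rw [h]
  have : 1 ≤ Fintype.card F := Fintype.card_pos
  push_cast [Nat.cast_sub this]
  ring

lemma sum_chars (a : F) :
    ∑ χ : MulChar F ℂ, χ a = if a = 1 then ((Fintype.card F : ℂ) - 1) else 0 := by
  split_ifs with h
  · subst h; simp only [map_one]
    rw [Finset.sum_const, Finset.card_univ, nsmul_eq_mul, mul_one, card_mulChar]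
  · rcases eq_or_ne a 0 with rfl | ha0
    · simp only [MulChar.map_zero, Finset.sum_const_zero]
    · obtain ⟨χ₀, hχ₀⟩ := MulChar.exists_apply_ne_one_of_hasEnoughRootsOfUnity F ℂ h
      have key : χ₀ a * ∑ χ : MulChar F ℂ, χ a = ∑ χ : MulChar F ℂ, χ a := by
        rw [Finset.mul_sum]
        simp_rw [← MulChar.mul_apply]
        exact Fintype.sum_bijective (χ₀ * ·) (Group.mulLeft_bijective χ₀) _ _ fun χ => rfl
      have h2 : (χ₀ a - 1) * ∑ χ : MulChar F ℂ, χ a = 0 := by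
        rw [sub_mul, key, one_mul, sub_self]
      rcases mul_eq_zero.mp h2 with h1 | h1
      · exact absurd (sub_eq_zero.mp h1) hχ₀
      · exact h1

lemma theta_collapse (θ : MulChar F ℂ) (w u v t : F) :
    θ (-1) * θ w * θ⁻¹ (1-w) * θ (-1) * θ u * θ⁻¹ (1-u-v) * θ t
      = θ (w * u * t * ((1-w)*(1-u-v))⁻¹) := by
  simp only [MulChar.inv_apply', mul_inv, ← map_mul]
  congr 1
  ring

lemma key1 (ψ χ2 χ3 : MulChar F ℂ) (q1 : ℂ) {t a s : F} (ht : t ≠ 0) :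
    (∑ w : F, ψ w * (if w * a * t * ((1 - w) * s)⁻¹ = 1 then q1 else 0)) * (χ2 s * χ3 a)
    = q1 * ψ (s / (s + a * t)) * (χ2 s * χ3 a) := by
  rcases eq_or_ne s 0 with rfl | hs
  · simp [MulChar.map_zero]
  rcases eq_or_ne a 0 with rfl | ha
  · simp [MulChar.map_zero]
  rcases eq_or_ne (s + a * t) 0 with hD | hD
  · rw [hD, div_zero, MulChar.map_zero, mul_zero, zero_mul]
    have hz : ∀ w : F, ¬ (w * a * t * ((1 - w) * s)⁻¹ = 1) := by
      intro w hw
      have h1w : (1 - w) * s ≠ 0 := by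
        intro h0; rw [h0, inv_zero, mul_zero] at hw; exact zero_ne_one hw
      have : w * a * t = (1 - w) * s := by
        field_simp at hw; rw [div_eq_iff (left_ne_zero_of_mul h1w)] at hw; linear_combination hw
      have hws : w * (s + a * t) = s := by linear_combination this
      rw [hD, mul_zero] at hws; exact hs hws.symm
    simp only [hz, if_false, mul_zero, Finset.sum_const_zero, zero_mul]
  · have hiff : ∀ w : F, (w * a * t * ((1 - w) * s)⁻¹ = 1) ↔ w = s / (s + a * t) := by
      intro w
      constructor
      · intro hw
        have h1w : (1 - w) * s ≠ 0 := by
          intro h0; rw [h0, inv_zero, mul_zero] at hw; exact zero_ne_one hw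
        have h2 : w * a * t = (1 - w) * s := by
          field_simp at hw; rw [div_eq_iff (left_ne_zero_of_mul h1w)] at hw; linear_combination hw
        have hws : w * (s + a * t) = s := by linear_combination h2
        field_simp [hD]
        linear_combination hws
      · rintro rfl
        have h1w : 1 - s / (s + a * t) = a * t / (s + a * t) := by field_simp; ring
        rw [h1w]
        field_simp
    simp only [hiff]
    rw [Finset.sum_congr rfl (fun w _ => by
      rw [show (ψ w * if w = s / (s + a * t) then q1 else 0)
        = if w = s / (s + a * t) then ψ w * q1 else 0 by split_ifs <;> simp])]
    rw [Finset.sum_ite_eq' Finset.univ (s / (s + a * t)) (fun w => ψ w * q1),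
      if_pos (Finset.mem_univ _)]
    ring

lemma double_expand (p b c : ℂ) (g : F → F → ℂ) :
    p * (b * ∑ u : F, ∑ v : F, g u v) * c = ∑ u : F, ∑ v : F, p * (b * g u v) * c := by
  rw [Finset.mul_sum _ _ b, Finset.mul_sum _ _ p, Finset.sum_mul]
  refine Finset.sum_congr rfl fun u _ => ?_
  rw [Finset.mul_sum _ _ b, Finset.mul_sum _ _ p, Finset.sum_mul]

lemma triple_expand (a b c d : ℂ) (f : F → ℂ) (g : F → F → ℂ) (h : F → F → F → ℂ)
    (hpt : ∀ w u v, a * f w * (b * g u v) * c = d * h w u v) :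
    (a * ∑ w : F, f w) * (b * ∑ u : F, ∑ v : F, g u v) * c
      = d * ∑ w : F, ∑ u : F, ∑ v : F, h w u v := by
  rw [Finset.mul_sum _ _ d, Finset.mul_sum _ _ a, Finset.sum_mul, Finset.sum_mul]
  refine Finset.sum_congr rfl fun w _ => ?_
  rw [double_expand, Finset.mul_sum _ _ d]
  refine Finset.sum_congr rfl fun u _ => ?_
  rw [Finset.mul_sum _ _ d]
  exact Finset.sum_congr rfl fun v _ => hpt w u v

lemma stepL (A A' B B' C : MulChar F ℂ) (x t y : F) (ht0 : t ≠ 0) :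
    ∑ θ : MulChar F ℂ, binom (B*B'*C⁻¹*θ) θ * AF3 A A' (B*θ) B' C x y * θ t
  = ((Fintype.card F : ℂ) - 1) * ((1:MulChar F ℂ) (x*y) * B (-1) * B' (-1)) *
      ∑ u : F, ∑ v : F, (B*B'*C⁻¹) ((1-u-v)/(1-u-v+u*t)) *
        ((C*B⁻¹*B'⁻¹) (1-u-v) * (B u * B' v * A⁻¹ (1-u*x) * A'⁻¹ (1-v*y))) := by
  set q1 : ℂ := (Fintype.card F : ℂ) - 1 with hq1def
  set c : ℂ := (1:MulChar F ℂ) (x*y) * B (-1) * B' (-1) with hcdef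
  set G : F → F → F → ℂ := fun w u v =>
    (B*B'*C⁻¹) w * ((C*B⁻¹*B'⁻¹) (1-u-v) * (B u * B' v * A⁻¹ (1-u*x) * A'⁻¹ (1-v*y)))
    with hGdef
  have hθ : ∀ θ : MulChar F ℂ, binom (B*B'*C⁻¹*θ) θ * AF3 A A' (B*θ) B' C x y * θ t
      = c * ∑ w : F, ∑ u : F, ∑ v : F, G w u v * θ (w * u * t * ((1-w)*(1-u-v))⁻¹) := by
    intro θ
    have hC : C*(B*θ)⁻¹*B'⁻¹ = (C*B⁻¹*B'⁻¹)*θ⁻¹ := by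
      rw [mul_inv]; simp only [mul_comm, mul_assoc, mul_left_comm]
    rw [binom, AF3, Jsum, hC]
    simp only [MulChar.mul_apply (B*B'*C⁻¹) θ, MulChar.mul_apply (C*B⁻¹*B'⁻¹) θ⁻¹,
      MulChar.mul_apply B θ]
    exact triple_expand _ _ _ _ _ _ _ fun w u v => by
      rw [← theta_collapse θ w u v t, hGdef, hcdef]
      ring
  calc ∑ θ : MulChar F ℂ, binom (B*B'*C⁻¹*θ) θ * AF3 A A' (B*θ) B' C x y * θ t
      = ∑ θ : MulChar F ℂ, c * ∑ w : F, ∑ u : F, ∑ v : F,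
          G w u v * θ (w * u * t * ((1-w)*(1-u-v))⁻¹) :=
        Finset.sum_congr rfl fun θ _ => hθ θ
    _ = c * ∑ θ : MulChar F ℂ, ∑ w : F, ∑ u : F, ∑ v : F,
          G w u v * θ (w * u * t * ((1-w)*(1-u-v))⁻¹) := (Finset.mul_sum _ _ _).symm
    _ = c * ∑ w : F, ∑ u : F, ∑ v : F, ∑ θ : MulChar F ℂ,
          G w u v * θ (w * u * t * ((1-w)*(1-u-v))⁻¹) := by
        congr 1
        rw [Finset.sum_comm]
        refine Finset.sum_congr rfl fun w _ => ?_
        rw [Finset.sum_comm]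
        refine Finset.sum_congr rfl fun u _ => ?_
        rw [Finset.sum_comm]
    _ = c * ∑ w : F, ∑ u : F, ∑ v : F,
          G w u v * (if w * u * t * ((1-w)*(1-u-v))⁻¹ = 1 then q1 else 0) := by
        congr 1
        refine Finset.sum_congr rfl fun w _ => Finset.sum_congr rfl fun u _ =>
          Finset.sum_congr rfl fun v _ => ?_
        rw [← Finset.mul_sum, sum_chars]
    _ = c * ∑ u : F, ∑ v : F, ∑ w : F,
          G w u v * (if w * u * t * ((1-w)*(1-u-v))⁻¹ = 1 then q1 else 0) := by
        congr 1
        rw [Finset.sum_comm]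
        exact Finset.sum_congr rfl fun u _ => Finset.sum_comm
    _ = c * ∑ u : F, ∑ v : F, q1 * ((B*B'*C⁻¹) ((1-u-v)/(1-u-v+u*t)) *
          ((C*B⁻¹*B'⁻¹) (1-u-v) * (B u * B' v * A⁻¹ (1-u*x) * A'⁻¹ (1-v*y)))) := by
        congr 1
        refine Finset.sum_congr rfl fun u _ => Finset.sum_congr rfl fun v _ => ?_
        have hk := key1 (B*B'*C⁻¹) (C*B⁻¹*B'⁻¹) B q1 (t := t) (a := u) (s := 1-u-v) ht0
        calc ∑ w : F, G w u v * (if w * u * t * ((1-w)*(1-u-v))⁻¹ = 1 then q1 else 0)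
            = (∑ w : F, (B*B'*C⁻¹) w *
                (if w * u * t * ((1-w)*(1-u-v))⁻¹ = 1 then q1 else 0)) *
                ((C*B⁻¹*B'⁻¹) (1-u-v) * B u) * (B' v * A⁻¹ (1-u*x) * A'⁻¹ (1-v*y)) := by
              rw [Finset.sum_mul, Finset.sum_mul]
              exact Finset.sum_congr rfl fun w _ => by rw [hGdef]; ring
          _ = q1 * (B*B'*C⁻¹) ((1-u-v) / ((1-u-v) + u * t)) *
                ((C*B⁻¹*B'⁻¹) (1-u-v) * B u) * (B' v * A⁻¹ (1-u*x) * A'⁻¹ (1-v*y)) := by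
              rw [hk]
          _ = q1 * ((B*B'*C⁻¹) ((1-u-v)/(1-u-v+u*t)) *
                ((C*B⁻¹*B'⁻¹) (1-u-v) * (B u * B' v * A⁻¹ (1-u*x) * A'⁻¹ (1-v*y)))) := by
              ring
    _ = q1 * c * ∑ u : F, ∑ v : F, (B*B'*C⁻¹) ((1-u-v)/(1-u-v+u*t)) *
          ((C*B⁻¹*B'⁻¹) (1-u-v) * (B u * B' v * A⁻¹ (1-u*x) * A'⁻¹ (1-v*y))) := by
        have hpull : ∀ u : F, (∑ v : F, q1 * ((B*B'*C⁻¹) ((1-u-v)/(1-u-v+u*t)) *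
            ((C*B⁻¹*B'⁻¹) (1-u-v) * (B u * B' v * A⁻¹ (1-u*x) * A'⁻¹ (1-v*y)))))
            = q1 * ∑ v : F, (B*B'*C⁻¹) ((1-u-v)/(1-u-v+u*t)) *
            ((C*B⁻¹*B'⁻¹) (1-u-v) * (B u * B' v * A⁻¹ (1-u*x) * A'⁻¹ (1-v*y))) :=
          fun u => (Finset.mul_sum _ _ q1).symm
        rw [Finset.sum_congr rfl fun u _ => hpull u, ← Finset.mul_sum]
        ring

lemma stepR1 (A A' B B' C : MulChar F ℂ) (x t y : F)
    (hx0 : x ≠ 0) (h1t : (1:F) - t ≠ 0) (hy0 : y ≠ 0) :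
    B⁻¹ (1-t) * AF3 A A' B B' C (x/(1-t)) y
    = B (-1) * B' (-1) * ∑ u : F, ∑ v : F,
        B u * B' v * (C*B⁻¹*B'⁻¹) (1-u*(1-t)-v) * A⁻¹ (1-u*x) * A'⁻¹ (1-v*y) := by
  rw [AF3]
  have heps : (1 : MulChar F ℂ) (x/(1-t)*y) = 1 :=
    MulChar.one_apply (isUnit_iff_ne_zero.mpr (mul_ne_zero (div_ne_zero hx0 h1t) hy0))
  rw [heps]
  have hsub : (∑ u : F, ∑ v : F, B u * B' v * (C*B⁻¹*B'⁻¹) (1-u-v) *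
      A⁻¹ (1 - u*(x/(1-t))) * A'⁻¹ (1-v*y))
      = B (1-t) * ∑ u : F, ∑ v : F, B u * B' v * (C*B⁻¹*B'⁻¹) (1-u*(1-t)-v) *
        A⁻¹ (1-u*x) * A'⁻¹ (1-v*y) := by
    rw [Finset.mul_sum]
    refine (Fintype.sum_equiv (Equiv.mulRight₀ ((1:F)-t) h1t) _ _ fun u => ?_).symm
    rw [Finset.mul_sum]
    refine Finset.sum_congr rfl fun v _ => ?_
    have he : (Equiv.mulRight₀ ((1:F)-t) h1t) u = u * (1-t) := rfl
    rw [he, map_mul]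
    have harg : 1 - u * (1-t) * (x/(1-t)) = 1 - u * x := by
      field_simp
    rw [harg]
    ring
  rw [hsub]
  have hBB : B⁻¹ (1-t) * B (1-t) = 1 := by
    rw [mul_comm]; exact mc_mul_inv_self B h1t
  generalize (∑ u : F, ∑ v : F, B u * B' v * (C*B⁻¹*B'⁻¹) (1-u*(1-t)-v) *
      A⁻¹ (1-u*x) * A'⁻¹ (1-v*y)) = S
  linear_combination B (-1) * B' (-1) * S * hBB

lemma stepT (A A' B B' C : MulChar F ℂ) (x t y : F) :
    (∑ u : F, ∑ v : F, (B*B'*C⁻¹) ((1-u-v)/(1-u-v+u*t)) *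
        ((C*B⁻¹*B'⁻¹) (1-u-v) * (B u * B' v * A⁻¹ (1-u*x) * A'⁻¹ (1-v*y))))
    = (∑ u : F, ∑ v : F, B u * B' v * (C*B⁻¹*B'⁻¹) (1-u*(1-t)-v) *
        A⁻¹ (1-u*x) * A'⁻¹ (1-v*y))
      - (C*B⁻¹*B'⁻¹) t * ∑ u : F, (C*B'⁻¹) u * B' (1-u) * A⁻¹ (1-u*x) *
          A'⁻¹ (1-(1-u)*y) := by
  have hinv : (B*B'*C⁻¹ : MulChar F ℂ) = (C*B⁻¹*B'⁻¹)⁻¹ := by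
    rw [mul_inv, mul_inv, inv_inv, inv_inv]
    simp only [mul_comm, mul_assoc, mul_left_comm]
  have hmer : (B * (C*B⁻¹*B'⁻¹) : MulChar F ℂ) = C*B'⁻¹ := by
    rw [show (B * (C*B⁻¹*B'⁻¹) : MulChar F ℂ) = (B * B⁻¹) * (C*B'⁻¹) by
      simp only [mul_comm, mul_assoc, mul_left_comm], mul_inv_cancel, one_mul]
  have hpt : ∀ u v : F, (B*B'*C⁻¹) ((1-u-v)/(1-u-v+u*t)) *
      ((C*B⁻¹*B'⁻¹) (1-u-v) * (B u * B' v * A⁻¹ (1-u*x) * A'⁻¹ (1-v*y)))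
      = B u * B' v * (C*B⁻¹*B'⁻¹) (1-u*(1-t)-v) * A⁻¹ (1-u*x) * A'⁻¹ (1-v*y)
        - (if v = 1-u then (C*B⁻¹*B'⁻¹) t * ((C*B'⁻¹) u * B' (1-u) * A⁻¹ (1-u*x) *
            A'⁻¹ (1-(1-u)*y)) else 0) := by
    intro u v
    have h1 : (B*B'*C⁻¹) ((1-u-v)/(1-u-v+u*t)) * (C*B⁻¹*B'⁻¹) (1-u-v)
        = (C*B⁻¹*B'⁻¹) (1-u-v+u*t) * (1 : MulChar F ℂ) (1-u-v) := by
      rw [hinv]; exact mc_inv_div _ _ _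
    calc (B*B'*C⁻¹) ((1-u-v)/(1-u-v+u*t)) *
        ((C*B⁻¹*B'⁻¹) (1-u-v) * (B u * B' v * A⁻¹ (1-u*x) * A'⁻¹ (1-v*y)))
        = ((B*B'*C⁻¹) ((1-u-v)/(1-u-v+u*t)) * (C*B⁻¹*B'⁻¹) (1-u-v)) *
          (B u * B' v * A⁻¹ (1-u*x) * A'⁻¹ (1-v*y)) := by ring
      _ = (C*B⁻¹*B'⁻¹) (1-u-v+u*t) * (1 : MulChar F ℂ) (1-u-v) *
          (B u * B' v * A⁻¹ (1-u*x) * A'⁻¹ (1-v*y)) := by rw [h1]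
      _ = _ := by
          rw [mc_eps]
          rcases eq_or_ne ((1:F) - u - v) 0 with h0 | h0
          · have hv : v = 1 - u := by linear_combination -h0
            rw [if_pos h0, if_pos hv]
            subst hv
            have harg : (1 : F) - u*(1-t) - (1-u) = u * t := by ring
            rw [harg, map_mul]
            have hBu : B u * (C*B⁻¹*B'⁻¹) u = (C*B'⁻¹) u := by
              rw [← MulChar.mul_apply, hmer]
            linear_combination (-(B' (1-u) * A⁻¹ (1-u*x) * A'⁻¹ (1-(1-u)*y) *
              (C*B⁻¹*B'⁻¹) t)) * hBu
          · have hv : ¬ (v = 1 - u) := by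
              intro hv; exact h0 (by rw [hv]; ring)
            rw [if_neg h0, if_neg hv]
            have harg : (1:F) - u - v + u*t = 1 - u*(1-t) - v := by ring
            rw [harg]
            ring
  rw [Finset.sum_congr rfl fun u _ => Finset.sum_congr rfl fun v _ => hpt u v]
  rw [Finset.sum_congr rfl fun u _ => Finset.sum_sub_distrib _ _, Finset.sum_sub_distrib]
  congr 1
  rw [Finset.mul_sum]
  refine Finset.sum_congr rfl fun u _ => ?_
  rw [Finset.sum_ite_eq' Finset.univ (1-u), if_pos (Finset.mem_univ _)]

lemma stepR2 (A A' B B' C : MulChar F ℂ) (x t y : F)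
    (hx0 : x ≠ 0) (ht0 : t ≠ 0) (hy0 : y ≠ 0) :
    (B⁻¹*B'⁻¹*C) (-t) * AF3 A A' (C*B'⁻¹) B' C x y
    = B (-1) * B' (-1) * (C*B⁻¹*B'⁻¹) t *
      ((∑ u : F, (C*B'⁻¹) u * A⁻¹ (1-u*x)) * (∑ v : F, B' v * A'⁻¹ (1-v*y))
        - ∑ u : F, (C*B'⁻¹) u * B' (1-u) * A⁻¹ (1-u*x) * A'⁻¹ (1-(1-u)*y)) := by
  rw [AF3]
  have heps : (1 : MulChar F ℂ) (x*y) = 1 :=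
    MulChar.one_apply (isUnit_iff_ne_zero.mpr (mul_ne_zero hx0 hy0))
  have hmid : (C*(C*B'⁻¹)⁻¹*B'⁻¹ : MulChar F ℂ) = 1 := by
    rw [mul_inv, inv_inv,
      show (C*(C⁻¹*B')*B'⁻¹ : MulChar F ℂ) = (C*C⁻¹)*(B'*B'⁻¹) by
        simp only [mul_comm, mul_assoc, mul_left_comm],
      mul_inv_cancel, mul_inv_cancel, one_mul]
  rw [heps, hmid]
  have hsum : (∑ u : F, ∑ v : F, (C*B'⁻¹) u * B' v * (1 : MulChar F ℂ) (1-u-v) *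
      A⁻¹ (1-u*x) * A'⁻¹ (1-v*y))
      = (∑ u : F, (C*B'⁻¹) u * A⁻¹ (1-u*x)) * (∑ v : F, B' v * A'⁻¹ (1-v*y))
        - ∑ u : F, (C*B'⁻¹) u * B' (1-u) * A⁻¹ (1-u*x) * A'⁻¹ (1-(1-u)*y) := by
    have hpt : ∀ u v : F, (C*B'⁻¹) u * B' v * (1 : MulChar F ℂ) (1-u-v) *
        A⁻¹ (1-u*x) * A'⁻¹ (1-v*y)
        = ((C*B'⁻¹) u * A⁻¹ (1-u*x)) * (B' v * A'⁻¹ (1-v*y))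
          - (if v = 1-u then (C*B'⁻¹) u * B' (1-u) * A⁻¹ (1-u*x) * A'⁻¹ (1-(1-u)*y)
              else 0) := by
      intro u v
      rw [mc_eps]
      rcases eq_or_ne ((1:F) - u - v) 0 with h0 | h0
      · have hv : v = 1 - u := by linear_combination -h0
        rw [if_pos h0, if_pos hv]
        subst hv
        ring
      · have hv : ¬ (v = 1 - u) := fun hv => h0 (by rw [hv]; ring)
        rw [if_neg h0, if_neg hv]
        ring
    rw [Finset.sum_congr rfl fun u _ => Finset.sum_congr rfl fun v _ => hpt u v]
    rw [Finset.sum_congr rfl fun u _ => Finset.sum_sub_distrib _ _, Finset.sum_sub_distrib]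
    congr 1
    · rw [← Fintype.sum_mul_sum]
    · refine Finset.sum_congr rfl fun u _ => ?_
      rw [Finset.sum_ite_eq' Finset.univ (1-u), if_pos (Finset.mem_univ _)]
  rw [hsum]
  have hcoef : (B⁻¹*B'⁻¹*C) (-t) * ((C*B'⁻¹) (-1)) * B' (-1)
      = B (-1) * B' (-1) * (C*B⁻¹*B'⁻¹) t := by
    have hneg : (-t : F) = (-1) * t := by ring
    rw [hneg]
    simp only [MulChar.mul_apply, map_mul, MulChar.inv_apply_eq_inv', mc_apply_inv]
    have h1 := mc_sq B'
    have h2 := mc_sq C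
    have h3 := mc_sq B
    have hB : B (-1) ≠ 0 := mc_ne_zero B (by norm_num)
    have hB' : B' (-1) ≠ 0 := mc_ne_zero B' (by norm_num)
    have hC : C (-1) ≠ 0 := mc_ne_zero C (by norm_num)
    have hBt : B t ≠ 0 := mc_ne_zero B ht0
    have hB't : B' t ≠ 0 := mc_ne_zero B' ht0
    have hCt : C t ≠ 0 := mc_ne_zero C ht0
    field_simp
    linear_combination h2 - B (-1) ^ 2 * h1 - h3
  generalize ((∑ u : F, (C*B'⁻¹) u * A⁻¹ (1-u*x)) * (∑ v : F, B' v * A'⁻¹ (1-v*y))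
        - ∑ u : F, (C*B'⁻¹) u * B' (1-u) * A⁻¹ (1-u*x) * A'⁻¹ (1-(1-u)*y)) = S
  linear_combination S * hcoef

lemma stepR3 (A A' B B' C : MulChar F ℂ) (x t y : F)
    (hx0 : x ≠ 0) (ht0 : t ≠ 0) (hy0 : y ≠ 0) :
    B'⁻¹ y * B⁻¹ (-t) * (C⁻¹*B') (-x/t) * binom A⁻¹ (C⁻¹*B') * binom A'⁻¹ B'⁻¹
    = B (-1) * B' (-1) * (C*B⁻¹*B'⁻¹) t *
      ((∑ u : F, (C*B'⁻¹) u * A⁻¹ (1-u*x)) * (∑ v : F, B' v * A'⁻¹ (1-v*y))) := by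
  have hq1 : ((C⁻¹*B')⁻¹ : MulChar F ℂ) = C*B'⁻¹ := by rw [mul_inv, inv_inv]
  have hq2 : ((B'⁻¹)⁻¹ : MulChar F ℂ) = B' := inv_inv B'
  have hP : (∑ u : F, (C*B'⁻¹) u * A⁻¹ (1-u*x))
      = (C*B'⁻¹) x⁻¹ * Jsum A⁻¹ (C*B'⁻¹) := by
    rw [Jsum, Finset.mul_sum]
    refine Fintype.sum_equiv ((Equiv.mulRight₀ x hx0).trans (Equiv.subLeft 1)) _ _ fun u => ?_
    have he : ((Equiv.mulRight₀ x hx0).trans (Equiv.subLeft 1)) u = 1 - u * x := by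
      simp [Equiv.subLeft]
    rw [he]
    have h1 : (1 : F) - (1 - u * x) = u * x := by ring
    rw [h1, map_mul]
    have hxx : (C*B'⁻¹) x⁻¹ * (C*B'⁻¹) x = 1 := by
      rw [← map_mul, inv_mul_cancel₀ hx0, map_one]
    linear_combination (-((C*B'⁻¹) u * A⁻¹ (1-u*x))) * hxx
  have hQ : (∑ v : F, B' v * A'⁻¹ (1-v*y)) = B' y⁻¹ * Jsum A'⁻¹ B' := by
    rw [Jsum, Finset.mul_sum]
    refine Fintype.sum_equiv ((Equiv.mulRight₀ y hy0).trans (Equiv.subLeft 1)) _ _ fun v => ?_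
    have he : ((Equiv.mulRight₀ y hy0).trans (Equiv.subLeft 1)) v = 1 - v * y := by
      simp [Equiv.subLeft]
    rw [he]
    have h1 : (1 : F) - (1 - v * y) = v * y := by ring
    rw [h1, map_mul]
    have hyy : B' y⁻¹ * B' y = 1 := by
      rw [← map_mul, inv_mul_cancel₀ hy0, map_one]
    linear_combination (-(B' v * A'⁻¹ (1-v*y))) * hyy
  rw [hP, hQ, binom, binom, hq1, hq2]
  have hcoef : B'⁻¹ y * B⁻¹ (-t) * (C⁻¹*B') (-x/t) * (C⁻¹*B') (-1) * B'⁻¹ (-1)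
      = B (-1) * B' (-1) * (C*B⁻¹*B'⁻¹) t * ((C*B'⁻¹) x⁻¹ * B' y⁻¹) := by
    have h1 := mc_sq B'
    have h2 := mc_sq C
    simp only [MulChar.mul_apply, MulChar.inv_apply']
    have a3 : ((-x/t : F))⁻¹ = -1 * (x⁻¹ * t) := by
      field_simp
    have a2 : ((-x/t : F)) = -1 * (x * t⁻¹) := by ring
    have a1 : ((-t : F))⁻¹ = -1 * t⁻¹ := by
      field_simp
    have a4 : ((-1 : F))⁻¹ = -1 := by norm_num
    rw [a3, a2, a1, a4]
    simp only [map_mul, inv_inv]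
    set M := B' y⁻¹ * B (-1) * B t⁻¹ * C x⁻¹ * C t * B' x * B' t⁻¹ with hM
    linear_combination (M * B' (-1) * B' (-1) * B' (-1)) * h2 + (M * B' (-1)) * h1
  generalize Jsum A⁻¹ (C*B'⁻¹) = J1
  generalize Jsum A'⁻¹ B' = J2
  linear_combination (J1 * J2) * hcoef

theorem AF3_gen_third (A A' B B' C : MulChar F ℂ) (x t y : F)
    (hx0 : x ≠ 0) (hx1 : x ≠ 1) (ht0 : t ≠ 0) (ht1 : t ≠ 1) :
    (1 / ((Fintype.card F : ℂ) - 1)) * ∑ θ : MulChar F ℂ,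
        binom (B * B' * C⁻¹ * θ) θ * AF3 A A' (B * θ) B' C x y * θ t =
      B⁻¹ (1 - t) * AF3 A A' B B' C (x / (1 - t)) y +
      (B⁻¹ * B'⁻¹ * C) (-t) * AF3 A A' (C * B'⁻¹) B' C x y -
      B'⁻¹ y * B⁻¹ (-t) * (C⁻¹ * B') (-x / t) * binom A⁻¹ (C⁻¹ * B') *
        binom A'⁻¹ B'⁻¹ := by
  rcases eq_or_ne y 0 with rfl | hy0
  · simp [AF3, MulChar.map_zero, mul_zero]
  · have h1t : (1:F) - t ≠ 0 := sub_ne_zero.mpr (fun h => ht1 h.symm)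
    have hq1 : ((Fintype.card F : ℂ) - 1) ≠ 0 := by
      have h2 : 1 < Fintype.card F := Fintype.one_lt_card
      have hne : (Fintype.card F : ℂ) ≠ 1 := by
        intro h
        rw [show (1:ℂ) = ((1:ℕ):ℂ) by norm_num, Nat.cast_inj] at h
        omega
      exact sub_ne_zero.mpr hne
    have hepsxy : (1 : MulChar F ℂ) (x*y) = 1 :=
      MulChar.one_apply (isUnit_iff_ne_zero.mpr (mul_ne_zero hx0 hy0))
    rw [stepL A A' B B' C x t y ht0, hepsxy, stepT A A' B B' C x t y,
        stepR1 A A' B B' C x t y hx0 h1t hy0, stepR2 A A' B B' C x t y hx0 ht0 hy0,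
        stepR3 A A' B B' C x t y hx0 ht0 hy0]
    generalize (∑ u : F, ∑ v : F, B u * B' v * (C*B⁻¹*B'⁻¹) (1-u*(1-t)-v) *
        A⁻¹ (1-u*x) * A'⁻¹ (1-v*y)) = S1
    generalize (∑ u : F, (C*B'⁻¹) u * B' (1-u) * A⁻¹ (1-u*x) * A'⁻¹ (1-(1-u)*y)) = S2
    generalize (∑ u : F, (C*B'⁻¹) u * A⁻¹ (1-u*x)) = S3
    generalize (∑ v : F, B' v * A'⁻¹ (1-v*y)) = S4
    field_simp
    ring
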